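/- For every problem P and every first-order problem Q, if Q is Weihrauch reducible to P then Q is strongly Weihrauch reducible to the first-order part ¹P of P. -/

import Mathlib

open Classical

/-- A Turing functional, presented by a monotone computable map on finite prefixes
of the oracle. -/
structure Functional where
  eval : List ℕ → ℕ → Option ℕ
  mono : ∀ σ τ x y, σ <+: τ → eval σ x = some y → eval τ x = some y
  comp : Computable₂ eval

/-- The finite initial segment of `f` of length `k`. -/
def initSeg (f : ℕ → ℕ) (k : ℕ) : List ℕ := (List.range k).map f

/-- `Φ(f)(x)` converges with value `y`. -/
def Functional.conv (Φ : Functional) (f : ℕ → ℕ) (x y : ℕ) : Prop :=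
  ∃ k, Φ.eval (initSeg f k) x = some y

/-- Total application: `Φ(f) = g`. -/
def Functional.Total (Φ : Functional) (f g : ℕ → ℕ) : Prop :=
  ∀ x, Φ.conv f x (g x)

/-- The Turing join of two elements of Baire space. -/
def join (f g : ℕ → ℕ) : ℕ → ℕ := fun n => if n % 2 = 0 then f (n / 2) else g (n / 2)

/-- The embedding of `ℕ` into Baire space: `n` is identified with `n,0,0,0,…`. -/
def natSeq (n : ℕ) : ℕ → ℕ := fun i => if i = 0 then n else 0

/-- A problem: a partial multifunction on Baire space, given by its domain
(the set of instances) and, for each instance, its set of solutions. -/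
structure Problem where
  dom : Set (ℕ → ℕ)
  sol : (ℕ → ℕ) → Set (ℕ → ℕ)

/-- Weihrauch reducibility `Q ≤_W P`. -/
def WRed (Q P : Problem) : Prop :=
  ∃ Φ Ψ : Functional, ∀ f ∈ Q.dom, ∃ h, Φ.Total f h ∧ h ∈ P.dom ∧
    ∀ g ∈ P.sol h, ∃ y, Ψ.Total (join f g) y ∧ y ∈ Q.sol f

/-- Strong Weihrauch reducibility `Q ≤_sW P`: the backward functional only sees the solution. -/
def SRed (Q P : Problem) : Prop :=
  ∃ Φ Ψ : Functional, ∀ f ∈ Q.dom, ∃ h, Φ.Total f h ∧ h ∈ P.dom ∧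
    ∀ g ∈ P.sol h, ∃ y, Ψ.Total g y ∧ y ∈ Q.sol f

/-- Weihrauch equivalence. -/
def WEquiv (Q P : Problem) : Prop := WRed Q P ∧ WRed P Q

/-- Strong Weihrauch equivalence. -/
def SEquiv (Q P : Problem) : Prop := SRed Q P ∧ SRed P Q

/-- A problem is first-order if all its solutions are natural numbers
(under the identification of `n` with `natSeq n`). -/
def FirstOrder (P : Problem) : Prop :=
  ∀ f ∈ P.dom, ∀ g ∈ P.sol f, ∃ n, g = natSeq n

/-- The code of a functional as an element of Baire space (the graph of its
prefix-evaluation function). -/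
def Functional.graph (Φ : Functional) : ℕ → ℕ :=
  fun n => Encodable.encode (Φ.eval (Denumerable.ofNat (List ℕ) n.unpair.1) n.unpair.2)

/-- The first-order part `¹P` of a problem `P`: instances are (codes of) triples
`⟨f,Φ,Ψ⟩` with `Φ(f) ∈ dom(P)` and `Ψ(f,g)(0)↓` for all `g ∈ P(Φ(f))`; the
solutions are all values `Ψ(f,g)(0)` for `g ∈ P(Φ(f))`. -/
def FOPart (P : Problem) : Problem where
  dom := { h | ∃ (f : ℕ → ℕ) (Φ Ψ : Functional), h = join f (join Φ.graph Ψ.graph) ∧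
    ∃ p, Φ.Total f p ∧ p ∈ P.dom ∧ ∀ g ∈ P.sol p, ∃ y, Ψ.conv (join f g) 0 y }
  sol h := { w | ∃ (f : ℕ → ℕ) (Φ Ψ : Functional) (p g : ℕ → ℕ) (y : ℕ),
    h = join f (join Φ.graph Ψ.graph) ∧ Φ.Total f p ∧ p ∈ P.dom ∧ g ∈ P.sol p ∧
    Ψ.conv (join f g) 0 y ∧ w = natSeq y }

/-- `P` is computably true: every instance computes one of its solutions. -/
def ComputablyTrue (P : Problem) : Prop :=
  ∀ f ∈ P.dom, ∃ g ∈ P.sol f, ∃ Φ : Functional, Φ.Total f g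

/-- `P` is uniformly computably true: a single functional solves every instance. -/
def UnifCompTrue (P : Problem) : Prop :=
  ∃ Φ : Functional, ∀ f ∈ P.dom, ∃ g, Φ.Total f g ∧ g ∈ P.sol f

/-- `σ` is a finite initial segment of some `P`-solution to `f`. -/
def Extendible (P : Problem) (f : ℕ → ℕ) (σ : List ℕ) : Prop :=
  ∃ g ∈ P.sol f, σ = initSeg g σ.length

/-- `P` is undiagonalizable: the set of strings extendible to a solution is
uniformly decidable from the instance. -/
def Undiag (P : Problem) : Prop :=
  ∃ Γ : Functional, ∀ f ∈ P.dom, ∀ σ : List ℕ,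
    (Extendible P f σ → Γ.conv f (Encodable.encode σ) 1) ∧
    (¬ Extendible P f σ → Γ.conv f (Encodable.encode σ) 0)

/-!
Given `Q ≤_W P` via `Φ, Ψ`, map `f` to the `¹P`-instance `⟨f, Φ, Ψ⟩`, computable from `f` because
the codes of `Φ` and `Ψ` are computable constants, and take the identity as backward functional.
The code `⟨f, Φ, Ψ⟩` determines `f`, `Φ` and `Ψ`, so every `¹P`-solution of it is `Ψ(f, g)(0)` for
some `g ∈ P(Φ(f))`; as `Q` is first-order, `Ψ(f, g)` is that number viewed as a sequence, which is a
`Q`-solution to `f`.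
-/

lemma initSeg_prefix (f : ℕ → ℕ) {k k' : ℕ} (h : k ≤ k') : initSeg f k <+: initSeg f k' := by
  have : initSeg f k = (initSeg f k').take k := by
    simp [initSeg, ← List.map_take, List.take_range, Nat.min_eq_left h]
  exact this ▸ List.take_prefix _ _

lemma initSeg_getElem? (f : ℕ → ℕ) (x : ℕ) : (initSeg f (x + 1))[x]? = some (f x) := by
  simp [initSeg]

lemma join_eq_cond (f g : ℕ → ℕ) (n : ℕ) : join f g n = bif n.bodd then g n.div2 else f n.div2 := by
  cases h : n.bodd <;> simp [join, Nat.div2_val, Nat.mod_two_of_bodd, h]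

lemma join_computable {f g : ℕ → ℕ} (hf : Computable f) (hg : Computable g) :
    Computable (join f g) :=
  (Computable.cond Computable.nat_bodd (hg.comp Computable.nat_div2)
    (hf.comp Computable.nat_div2)).of_eq fun n => (join_eq_cond f g n).symm

lemma join_injective2 : Function.Injective2 join := by
  intro f f' g g' h
  refine ⟨funext fun n => ?_, funext fun n => ?_⟩
  · simpa [join] using congrFun h (2 * n)
  · simpa [join, Nat.add_mod, show (2 * n + 1) / 2 = n by omega] using congrFun h (2 * n + 1)

lemma FirstOrder.eq_natSeq {Q : Problem} (hQ : FirstOrder Q) {f y : ℕ → ℕ} (hf : f ∈ Q.dom)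
    (hy : y ∈ Q.sol f) : y = natSeq (y 0) := by
  obtain ⟨n, rfl⟩ := hQ f hf y hy
  simp [natSeq]

namespace Functional

lemma conv.unique {Φ : Functional} {f : ℕ → ℕ} {x y y' : ℕ} (h : Φ.conv f x y)
    (h' : Φ.conv f x y') : y = y' := by
  obtain ⟨k, hk⟩ := h
  obtain ⟨k', hk'⟩ := h'
  have e := Φ.mono _ _ _ _ (initSeg_prefix f (le_max_left k k')) hk
  rw [Φ.mono _ _ _ _ (initSeg_prefix f (le_max_right k k')) hk'] at e
  exact (Option.some.inj e).symm

lemma Total.unique {Φ : Functional} {f g g' : ℕ → ℕ} (h : Φ.Total f g) (h' : Φ.Total f g') :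
    g = g' :=
  funext fun x => (h x).unique (h' x)

lemma graph_injective : Function.Injective graph := by
  rintro ⟨e, _, _⟩ ⟨e', _, _⟩ h
  have he : e = e' := funext fun σ => funext fun x => Encodable.encode_injective <| by
    simpa [graph] using congrFun h (Nat.pair (Encodable.encode σ) x)
  subst he
  rfl

lemma graph_computable (Φ : Functional) : Computable Φ.graph :=
  Computable.encode.comp <| Φ.comp.comp
    ((Computable.ofNat (List ℕ)).comp (Computable.fst.comp Computable.unpair))
    (Computable.snd.comp Computable.unpair)

protected def id : Functional where
  eval σ x := σ[x]?
  mono σ τ x y h hx := by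
    obtain ⟨t, rfl⟩ := h
    simpa [List.getElem?_append_left (List.getElem?_eq_some_iff.1 hx).1] using hx
  comp := Primrec.list_getElem?.to_comp

lemma id_total (g : ℕ → ℕ) : Functional.id.Total g g :=
  fun x => ⟨x + 1, initSeg_getElem? g x⟩

def joinRight (c : ℕ → ℕ) (hc : Computable c) : Functional where
  eval σ x := bif x.bodd then some (c x.div2) else σ[x.div2]?
  mono σ τ x y h := by
    cases hx : x.bodd
    · obtain ⟨t, rfl⟩ := h
      intro hσ
      simpa [List.getElem?_append_left (List.getElem?_eq_some_iff.1 hσ).1] using hσ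
    · exact id
  comp := Computable.cond (Computable.nat_bodd.comp Computable.snd)
    (Computable.option_some.comp (hc.comp (Computable.nat_div2.comp Computable.snd)))
    (Primrec.list_getElem?.to_comp.comp Computable.fst (Computable.nat_div2.comp Computable.snd))

lemma joinRight_total (c : ℕ → ℕ) (hc : Computable c) (f : ℕ → ℕ) :
    (joinRight c hc).Total f (join f c) := by
  intro x
  refine ⟨x.div2 + 1, ?_⟩
  cases hx : x.bodd <;> simp [joinRight, join_eq_cond, hx, initSeg_getElem?]

end Functional

lemma FOPart.mem_sol_join {P : Problem} {f w : ℕ → ℕ} {Φ Ψ : Functional} :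
    w ∈ (FOPart P).sol (join f (join Φ.graph Ψ.graph)) ↔ ∃ (p g : ℕ → ℕ) (y : ℕ),
      Φ.Total f p ∧ p ∈ P.dom ∧ g ∈ P.sol p ∧ Ψ.conv (join f g) 0 y ∧ w = natSeq y := by
  constructor
  · rintro ⟨f', Φ', Ψ', p, g, y, hcode, hrest⟩
    obtain ⟨rfl, hgraphs⟩ := join_injective2 hcode
    obtain ⟨hΦ, hΨ⟩ := join_injective2 hgraphs
    rw [Functional.graph_injective hΦ, Functional.graph_injective hΨ]
    exact ⟨p, g, y, hrest⟩
  · rintro ⟨p, g, y, hrest⟩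
    exact ⟨f, Φ, Ψ, p, g, y, rfl, hrest⟩

theorem first_order_red_implies_strong_red_to_FOPart (P Q : Problem)
    (hQ : FirstOrder Q) (h : WRed Q P) : SRed Q (FOPart P) := by
  obtain ⟨Φ, Ψ, hred⟩ := h
  have hcodes : Computable (join Φ.graph Ψ.graph) :=
    join_computable Φ.graph_computable Ψ.graph_computable
  refine ⟨Functional.joinRight _ hcodes, Functional.id, fun f hf => ?_⟩
  obtain ⟨p, hΦp, hp, hΨ⟩ := hred f hf
  refine ⟨_, Functional.joinRight_total _ hcodes f, ⟨f, Φ, Ψ, rfl, p, hΦp, hp, fun g hg => ?_⟩, ?_⟩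
  · obtain ⟨y, hy, -⟩ := hΨ g hg
    exact ⟨y 0, hy 0⟩
  · intro w hw
    obtain ⟨p', g, n, hΦp', -, hg, hn, rfl⟩ := FOPart.mem_sol_join.1 hw
    obtain rfl := hΦp'.unique hΦp
    obtain ⟨y, hy, hyQ⟩ := hΨ g hg
    obtain rfl := hn.unique (hy 0)
    exact ⟨y, hQ.eq_natSeq hf hyQ ▸ Functional.id_total y, hyQ⟩
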